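/- arXiv:1807.10944 — 4 statements merged into one kernel-verified Lean document; each statement's English description precedes it below -/
import Mathlib

section
/- Let (A, ·, α) be a Hom-associative algebra, i.e. (x·y)·α(z) = α(x)·(y·z) for all x,y,z. Define [x,y] = x·y − y·x. Then (A, [·,·], α) is a Hom-Lie algebra: the bracket is anticommutative and satisfies the Hom-Jacobi identity [[x,y],α(z)] + [[z,x],α(y)] + [[y,z],α(x)] = 0 for all x,y,z ∈ A. -/
variable {K A : Type*} [Field K] [AddCommGroup A] [Module K A]

/-- The commutator bracket `[x,y] = x·y - y·x` of a Hom-algebra. -/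
def commBr (mul : A →ₗ[K] A →ₗ[K] A) (x y : A) : A := mul x y - mul y x

/-- The Hom-algebra associated to a Hom-associative algebra is Hom-Lie:
the commutator bracket is anticommutative and satisfies the Hom-Jacobi identity. -/
theorem stmt0 (mul : A →ₗ[K] A →ₗ[K] A) (α : A →ₗ[K] A)
    (hassoc : ∀ x y z : A, mul (mul x y) (α z) = mul (α x) (mul y z)) :
    (∀ x y : A, commBr mul y x = - commBr mul x y) ∧
    (∀ x y z : A,
      commBr mul (commBr mul x y) (α z) + commBr mul (commBr mul z x) (α y)
        + commBr mul (commBr mul y z) (α x) = 0) := by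
  constructor
  · intro x y; simp [commBr]
  · intro x y z
    simp only [commBr, map_sub, LinearMap.sub_apply, hassoc]
    abel
end

section
/- Let (L,[·,·],α) be a multiplicative Hom-Lie algebra whose twist map α is invertible. Then (L, α⁻¹∘[·,·]) is a Lie algebra, i.e. the bracket {x,y} = α⁻¹([x,y]) is anticommutative and satisfies the Jacobi identity. -/
/-- The untwist of a multiplicative Hom-Lie algebra with invertible twist map is a
Lie algebra: the bracket `{x,y} = α⁻¹ [x,y]` is anticommutative and satisfies the
Jacobi identity. -/
theorem stmt4 {K L : Type*} [Field K] [AddCommGroup L] [Module K L]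
    (br : L →ₗ[K] L →ₗ[K] L) (e : L ≃ₗ[K] L)
    (hanti : ∀ x y : L, br y x = - br x y)
    (hjac : ∀ x y z : L, br (br x y) (e z) + br (br z x) (e y) + br (br y z) (e x) = 0)
    (hmult : ∀ x y : L, e (br x y) = br (e x) (e y)) :
    (∀ x y : L, e.symm (br y x) = - e.symm (br x y)) ∧
    (∀ x y z : L,
      e.symm (br (e.symm (br x y)) z) + e.symm (br (e.symm (br z x)) y)
        + e.symm (br (e.symm (br y z)) x) = 0) := by
  have hsymm : ∀ x y : L, e.symm (br x y) = br (e.symm x) (e.symm y) := by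
    intro x y
    apply e.injective
    rw [e.apply_symm_apply, hmult, e.apply_symm_apply, e.apply_symm_apply]
  refine ⟨fun x y => by rw [hanti, map_neg], fun x y z => ?_⟩
  have h := hjac (e.symm x) (e.symm y) (e.symm z)
  rw [e.apply_symm_apply, e.apply_symm_apply, e.apply_symm_apply] at h
  rw [hsymm x y, hsymm z x, hsymm y z, ← map_add, ← map_add, h, map_zero]
end

section
/- Let (L,[·,·],α) be a Hom-Lie algebra and (V,β) a vector space with β invertible. A linear map ρ : L → End(V) is a multiplicative representation of L on (V,β) if and only if ρ is a homomorphism of Hom-Lie algebras from L to (End(V), ⟦·,·⟧, Ad_β), where ⟦f,g⟧ = f•g − g•f with f•g = β f β⁻¹ g β⁻¹, and Ad_β(f) = β f β⁻¹. -/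
variable {K L V : Type*} [Field K] [AddCommGroup L] [Module K L]
  [AddCommGroup V] [Module K V]

/-- The twisted multiplication `f • g = β ∘ f ∘ β⁻¹ ∘ g ∘ β⁻¹` on `End(V)`. -/
def endHomMul (β : V ≃ₗ[K] V) (f g : Module.End K V) : Module.End K V :=
  β.toLinearMap ∘ₗ f ∘ₗ β.symm.toLinearMap ∘ₗ g ∘ₗ β.symm.toLinearMap

/-- The commutator bracket `⟦f,g⟧ = f•g − g•f` of the twisted multiplication. -/
def endHomBr (β : V ≃ₗ[K] V) (f g : Module.End K V) : Module.End K V :=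
  endHomMul β f g - endHomMul β g f

/-- The twist `Ad_β(f) = β ∘ f ∘ β⁻¹` on `End(V)`. -/
def endAd (β : V ≃ₗ[K] V) (f : Module.End K V) : Module.End K V :=
  β.toLinearMap ∘ₗ f ∘ₗ β.symm.toLinearMap

/-- For a Hom-Lie algebra `L` and invertible `β`, a linear map `ρ : L → End(V)`
is a multiplicative representation on `(V,β)` iff it is a homomorphism of Hom-Lie
algebras to `(End(V), ⟦·,·⟧, Ad_β)`. -/
theorem stmt11 (br : L →ₗ[K] L →ₗ[K] L) (α : L →ₗ[K] L)
    (hanti : ∀ x y : L, br y x = - br x y)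
    (hjac : ∀ x y z : L,
      br (br x y) (α z) + br (br z x) (α y) + br (br y z) (α x) = 0)
    (β : V ≃ₗ[K] V) (ρ : L →ₗ[K] Module.End K V) :
    ((∀ x y : L, ρ (br x y) ∘ₗ β.toLinearMap = ρ (α x) ∘ₗ ρ y - ρ (α y) ∘ₗ ρ x) ∧
      (∀ x : L, ρ (α x) ∘ₗ β.toLinearMap = β.toLinearMap ∘ₗ ρ x)) ↔
    ((∀ x y : L, ρ (br x y) = endHomBr β (ρ x) (ρ y)) ∧
      (∀ x : L, ρ (α x) = endAd β (ρ x))) := by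
  have key : ∀ x : L, (ρ (α x) ∘ₗ β.toLinearMap = β.toLinearMap ∘ₗ ρ x) ↔
      ρ (α x) = endAd β (ρ x) := by
    intro x
    constructor
    · intro h
      ext v
      have := congrArg (fun f => f (β.symm v)) h
      simpa [endAd] using this
    · intro h
      ext v
      simp [h, endAd]
  constructor
  · rintro ⟨h1, h2⟩
    have h2' : ∀ x : L, ρ (α x) = endAd β (ρ x) := fun x => (key x).mp (h2 x)
    refine ⟨?_, h2'⟩
    intro x y
    ext v
    have := congrArg (fun f => f (β.symm v)) (h1 x y)
    simp only [LinearMap.comp_apply, LinearMap.sub_apply,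
      LinearEquiv.coe_coe, LinearEquiv.apply_symm_apply] at this
    rw [this, h2' x, h2' y]
    simp [endHomBr, endHomMul, endAd]
  · rintro ⟨h1, h2⟩
    refine ⟨?_, fun x => (key x).mpr (h2 x)⟩
    intro x y
    ext v
    rw [h1 x y, h2 x, h2 y]
    simp [endHomBr, endHomMul, endAd]
end

section
/- Let (V,α) be a finite-dimensional vector space over an algebraically closed field with a linear map α : V → V, and let A ⫋ B be α-invariant subspaces. Then for every integer n with dim A ≤ n ≤ dim B there exists an α-invariant subspace C with A ⊆ C ⊆ B and dim C = n. In particular there is an α-invariant subspace C with A ⊆ C ⊂ B of codimension 1 in B. -/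
/-!
Quotienting by `A`, the endomorphism induced on the nonzero invariant subspace `B / A` has an
eigenvector since the field is algebraically closed. A lift `v ∈ B \ A` of it satisfies
`α v - c • v ∈ A`, so `A ⊔ K v` is invariant of dimension one more than `A`; iterating this step
reaches every dimension between `dim A` and `dim B`.
-/

open Module Submodule

namespace Module.End

variable {K V : Type*} [Field K] [AddCommGroup V] [Module K V]

lemma sup_span_singleton_mem_invtSubmodule {f : End K V} {A : Submodule K V}
    (hA : A ∈ f.invtSubmodule) {v : V} {c : K} (hv : f v - c • v ∈ A) :
    A ⊔ span K {v} ∈ f.invtSubmodule := by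
  have hfv : f v ∈ A ⊔ span K {v} := by
    rw [← sub_add_cancel (f v) (c • v)]
    exact add_mem_sup hv (smul_mem _ c (mem_span_singleton_self v))
  rw [mem_invtSubmodule_iff_map_le, Submodule.map_sup, map_span, Set.image_singleton]
  exact sup_le (((mem_invtSubmodule_iff_map_le f).mp hA).trans le_sup_left)
    ((span_singleton_le_iff_mem _ _).mpr hfv)

variable [IsAlgClosed K] [FiniteDimensional K V]

lemma exists_hasEigenvector_mem_of_mem_invtSubmodule {f : End K V} {W : Submodule K V}
    (hW : W ∈ f.invtSubmodule) (hW₀ : W ≠ ⊥) : ∃ c v, v ∈ W ∧ f.HasEigenvector c v := by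
  have : Nontrivial W := nontrivial_iff_ne_bot.mpr hW₀
  obtain ⟨c, hc⟩ := exists_eigenvalue (f.restrict hW)
  obtain ⟨w, hw⟩ := hc.exists_hasEigenvector
  refine ⟨c, w, w.2, mem_eigenspace_iff.mpr ?_, by simpa using hw.2⟩
  exact congrArg Subtype.val hw.apply_eq_smul

lemma exists_sub_smul_mem_of_lt {f : End K V} {A B : Submodule K V} (hAB : A < B)
    (hA : A ∈ f.invtSubmodule) (hB : B ∈ f.invtSubmodule) :
    ∃ v ∈ B, v ∉ A ∧ ∃ c : K, f v - c • v ∈ A := by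
  let g : End K (V ⧸ A) := A.mapQ A f hA
  have hW : B.map A.mkQ ∈ g.invtSubmodule := by
    rintro _ ⟨v, hv, rfl⟩
    exact ⟨f v, hB hv, rfl⟩
  have hW₀ : B.map A.mkQ ≠ ⊥ := by
    rw [Ne, ← le_bot_iff, map_le_iff_le_comap, comap_bot, ker_mkQ]
    exact hAB.not_ge
  obtain ⟨c, _, ⟨v, hvB, rfl⟩, hw⟩ := exists_hasEigenvector_mem_of_mem_invtSubmodule hW hW₀
  refine ⟨v, hvB, fun hvA ↦ hw.2 ((Quotient.mk_eq_zero A).mpr hvA), c, ?_⟩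
  rw [← Quotient.mk_eq_zero, Quotient.mk_sub, sub_eq_zero]
  exact hw.apply_eq_smul

lemma exists_invtSubmodule_finrank_succ {f : End K V} {A B : Submodule K V} (hAB : A < B)
    (hA : A ∈ f.invtSubmodule) (hB : B ∈ f.invtSubmodule) :
    ∃ C ∈ f.invtSubmodule, A ≤ C ∧ C ≤ B ∧ finrank K C = finrank K A + 1 := by
  obtain ⟨v, hvB, hvA, c, hv⟩ := exists_sub_smul_mem_of_lt hAB hA hB
  exact ⟨A ⊔ span K {v}, sup_span_singleton_mem_invtSubmodule hA hv, le_sup_left,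
    sup_le hAB.le ((span_singleton_le_iff_mem _ _).mpr hvB), finrank_sup_span_singleton hvA⟩

lemma exists_invtSubmodule_finrank_eq {f : End K V} {A B : Submodule K V} (hAB : A ≤ B)
    (hA : A ∈ f.invtSubmodule) (hB : B ∈ f.invtSubmodule) {n : ℕ} (hAn : finrank K A ≤ n)
    (hnB : n ≤ finrank K B) :
    ∃ C ∈ f.invtSubmodule, A ≤ C ∧ C ≤ B ∧ finrank K C = n := by
  induction n, hAn using Nat.le_induction with
  | base => exact ⟨A, hA, le_rfl, hAB, rfl⟩
  | succ n _ ih =>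
    obtain ⟨C, hC, hAC, hCB, rfl⟩ := ih (by omega)
    have hCB' : C < B := lt_of_le_of_ne hCB (by rintro rfl; omega)
    obtain ⟨D, hD, hCD, hDB, hDrank⟩ := exists_invtSubmodule_finrank_succ hCB' hC hB
    exact ⟨D, hD, hAC.trans hCD, hDB, hDrank⟩

end Module.End

/-- Over an algebraically closed field, between any two nested invariant subspaces
`A ⫋ B` of a finite-dimensional Hom-vector space `(V,α)` there are invariant
subspaces of every intermediate dimension; in particular there is an invariant
subspace `A ⊆ C ⊂ B` of codimension 1 in `B`. -/
theorem stmt16 {K V : Type*} [Field K] [IsAlgClosed K] [AddCommGroup V]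
    [Module K V] [FiniteDimensional K V]
    (α : V →ₗ[K] V) (A B : Submodule K V) (hAB : A < B)
    (hA : ∀ x ∈ A, α x ∈ A) (hB : ∀ x ∈ B, α x ∈ B) :
    (∀ n : ℕ, Module.finrank K A ≤ n → n ≤ Module.finrank K B →
      ∃ C : Submodule K V, A ≤ C ∧ C ≤ B ∧ (∀ x ∈ C, α x ∈ C) ∧
        Module.finrank K C = n) ∧
    (∃ C : Submodule K V, A ≤ C ∧ C < B ∧ (∀ x ∈ C, α x ∈ C) ∧
      Module.finrank K C + 1 = Module.finrank K B) := by
  have intermediate (n : ℕ) (hAn : finrank K A ≤ n) (hnB : n ≤ finrank K B) :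
      ∃ C : Submodule K V, A ≤ C ∧ C ≤ B ∧ (∀ x ∈ C, α x ∈ C) ∧ finrank K C = n := by
    obtain ⟨C, hC, hAC, hCB, hCn⟩ :=
      Module.End.exists_invtSubmodule_finrank_eq (f := α) hAB.le hA hB hAn hnB
    exact ⟨C, hAC, hCB, hC, hCn⟩
  have hrank : finrank K A < finrank K B := finrank_lt_finrank_of_lt hAB
  refine ⟨intermediate, ?_⟩
  obtain ⟨C, hAC, hCB, hC, hCn⟩ := intermediate (finrank K B - 1) (by omega) (by omega)
  exact ⟨C, hAC, lt_of_le_of_ne hCB (by rintro rfl; omega), hC, by omega⟩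
end
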